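/- arXiv:math/0406272 — 5 statements merged into one kernel-verified Lean document; each statement's English description precedes it below -/
import Mathlib

section
/- Let V and W be finite-dimensional real normed vector spaces, let C ⊆ V × W be a convex cone (C is convex and t·C ⊆ C for every real t > 0), let q : V × W → W be the projection (v,w) ↦ w, and let ν ∈ W be nonzero. If there exists x ∈ V with (x, ν) in the intrinsic interior (relative interior) of C, then dim(C ∩ H_ν) + dim(q(C)) = dim C + 1, where H_ν := {(v, tν) : v ∈ V, t ∈ ℝ}. -/
/-!
Let `z = (x, ν)` and `E = span C`. Because `C` is a cone containing `z`, its affine span is `E`,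
so for every `u ∈ E ∩ H_ν` the point `z + t u` lies in `C ∩ H_ν` for small `t ≠ 0`; hence
`span (C ∩ H_ν) = E ∩ H_ν`. The projection `q` maps `E ∩ H_ν` onto the line `ℝν` with kernel
`E ∩ ker q`, while rank–nullity for `q` on `E` gives `dim q(C) + dim (E ∩ ker q) = dim E`.
-/

open Filter Topology Pointwise

theorem LinearMap.finrank_map_add_finrank_inf_ker {K M N : Type*} [DivisionRing K]
    [AddCommGroup M] [Module K M] [AddCommGroup N] [Module K N] [FiniteDimensional K M]
    (f : M →ₗ[K] N) (E : Submodule K M) :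
    Module.finrank K (E.map f) + Module.finrank K ↥(E ⊓ LinearMap.ker f) =
      Module.finrank K E := by
  have hker : Submodule.comap E.subtype (LinearMap.ker f) =
      Submodule.comap E.subtype (E ⊓ LinearMap.ker f) := by
    rw [Submodule.comap_inf, Submodule.comap_subtype_self, top_inf_eq]
  have h := (f.domRestrict E).finrank_range_add_finrank_ker
  rwa [LinearMap.range_domRestrict, LinearMap.ker_domRestrict, hker,
    (Submodule.comapSubtypeEquivOfLe inf_le_left).finrank_eq] at h

theorem LinearMap.finrank_inf_comap_span_singleton {K M N : Type*} [DivisionRing K]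
    [AddCommGroup M] [Module K M] [AddCommGroup N] [Module K N] [FiniteDimensional K M]
    (f : M →ₗ[K] N) {E : Submodule K M} {z : M} (hzE : z ∈ E) (hfz : f z ≠ 0) :
    Module.finrank K ↥(E ⊓ (K ∙ f z).comap f) = Module.finrank K ↥(E ⊓ LinearMap.ker f) + 1 := by
  have hmap : (E ⊓ (K ∙ f z).comap f).map f = K ∙ f z := by
    refine le_antisymm (Submodule.map_le_iff_le_comap.mpr inf_le_right) ?_
    rw [Submodule.span_singleton_le_iff_mem]
    exact Submodule.mem_map_of_mem ⟨hzE, Submodule.mem_span_singleton_self _⟩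
  have hker : E ⊓ (K ∙ f z).comap f ⊓ LinearMap.ker f = E ⊓ LinearMap.ker f := by
    rw [inf_assoc, inf_eq_right.mpr (LinearMap.ker_le_comap f)]
  have h := f.finrank_map_add_finrank_inf_ker (E ⊓ (K ∙ f z).comap f)
  rw [hmap, hker, finrank_span_singleton hfz] at h
  omega

section

variable {F : Type*} [AddCommGroup F] [Module ℝ F]

theorem coe_affineSpan_eq_span_of_pos_smul_subset {C : Set F} (hcone : ∀ t : ℝ, 0 < t → t • C ⊆ C)
    (hC : C.Nonempty) : (affineSpan ℝ C : Set F) = Submodule.span ℝ C := by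
  obtain ⟨z, hz⟩ := hC
  have h2z : (2 : ℝ) • z ∈ C := hcone 2 two_pos (Set.smul_mem_smul_set hz)
  -- `0 = 1 • (z - 2 • z) + z` lies on the line through `z` and `2 • z`
  have h0 : (0 : F) ∈ affineSpan ℝ C := by
    have := AffineSubspace.smul_vsub_vadd_mem (affineSpan ℝ C) (1 : ℝ)
      (subset_affineSpan ℝ C hz) (subset_affineSpan ℝ C h2z) (subset_affineSpan ℝ C hz)
    simpa [two_smul] using this
  rw [← affineSpan_insert_eq_affineSpan ℝ h0, affineSpan_insert_zero]

variable [TopologicalSpace F] [IsTopologicalAddGroup F] [ContinuousSMul ℝ F]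

theorem eventually_add_smul_mem_of_mem_intrinsicInterior {C : Set F} {z u : F}
    (hz : z ∈ intrinsicInterior ℝ C) (hu : u ∈ (affineSpan ℝ C).direction) :
    ∀ᶠ t in 𝓝 (0 : ℝ), z + t • u ∈ C := by
  obtain ⟨y, hy, rfl⟩ := mem_intrinsicInterior.mp hz
  let g : ℝ → affineSpan ℝ C := fun t =>
    ⟨t • u +ᵥ (y : F), AffineSubspace.vadd_mem_of_mem_direction (Submodule.smul_mem _ t hu) y.2⟩
  have hg : Continuous g := by fun_prop
  have hg0 : g 0 = y := by ext; simp [g]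
  filter_upwards [hg.tendsto 0 (hg0 ▸ isOpen_interior.mem_nhds hy)] with t ht
  rw [add_comm]
  exact interior_subset (s := ((↑) : affineSpan ℝ C → F) ⁻¹' C) ht

theorem span_inter_eq_span_inf_of_mem_intrinsicInterior {C : Set F}
    (hcone : ∀ t : ℝ, 0 < t → t • C ⊆ C) {z : F} (hz : z ∈ intrinsicInterior ℝ C)
    {S : Submodule ℝ F} (hzS : z ∈ S) :
    Submodule.span ℝ (C ∩ S) = Submodule.span ℝ C ⊓ S := by
  refine le_antisymm
    (Submodule.span_le.mpr fun p hp => ⟨Submodule.subset_span hp.1, hp.2⟩) ?_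
  rintro u ⟨huC, huS⟩
  have hzC : z ∈ C := intrinsicInterior_subset hz
  have hspan := coe_affineSpan_eq_span_of_pos_smul_subset hcone ⟨z, hzC⟩
  have hu : u ∈ (affineSpan ℝ C).direction := by
    have h0 : (0 : F) ∈ (affineSpan ℝ C : Set F) := hspan ▸ zero_mem _
    have hu : u ∈ (affineSpan ℝ C : Set F) := hspan ▸ huC
    simpa using AffineSubspace.vsub_mem_direction hu h0
  have hev := eventually_add_smul_mem_of_mem_intrinsicInterior hz hu
  obtain ⟨t, hztu, ht⟩ :=
    (hev.filter_mono nhdsWithin_le_nhds |>.and self_mem_nhdsWithin).exists (f := 𝓝[≠] (0 : ℝ))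
  have hmem : z + t • u ∈ Submodule.span ℝ (C ∩ S) :=
    Submodule.subset_span ⟨hztu, S.add_mem hzS (S.smul_mem t huS)⟩
  have htu : t • u ∈ Submodule.span ℝ (C ∩ S) := by
    simpa using Submodule.sub_mem _ hmem (Submodule.subset_span ⟨hzC, hzS⟩)
  exact (Submodule.smul_mem_iff _ ht).mp htu

end

theorem stmt_4_general
    (V W : Type*) [NormedAddCommGroup V] [NormedSpace ℝ V] [FiniteDimensional ℝ V]
    [NormedAddCommGroup W] [NormedSpace ℝ W] [FiniteDimensional ℝ W]
    (C : Set (V × W))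
    (hcone : ∀ t : ℝ, 0 < t → t • C ⊆ C)
    (ν : W) (hν : ν ≠ 0)
    (hint : ∃ x : V, (x, ν) ∈ intrinsicInterior ℝ C) :
    Module.finrank ℝ
        ↥(Submodule.span ℝ (C ∩ ((⊤ : Submodule ℝ V).prod (ℝ ∙ ν) : Set (V × W))))
      + Module.finrank ℝ ↥(Submodule.span ℝ (Prod.snd '' C))
      = Module.finrank ℝ ↥(Submodule.span ℝ C) + 1 := by
  obtain ⟨x, hx⟩ := hint
  let q := LinearMap.snd ℝ V W
  have hH : (⊤ : Submodule ℝ V).prod (ℝ ∙ ν) = (ℝ ∙ q (x, ν)).comap q := by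
    ext; simp [q]
  have hxH : (x, ν) ∈ (⊤ : Submodule ℝ V).prod (ℝ ∙ ν) :=
    ⟨trivial, Submodule.mem_span_singleton_self ν⟩
  have hxC : (x, ν) ∈ Submodule.span ℝ C := Submodule.subset_span (intrinsicInterior_subset hx)
  have hq : Submodule.span ℝ (Prod.snd '' C) = (Submodule.span ℝ C).map q :=
    (Submodule.map_span q C).symm
  rw [span_inter_eq_span_inf_of_mem_intrinsicInterior hcone hx hxH, hH,
    q.finrank_inf_comap_span_singleton hxC hν, hq,
    ← q.finrank_map_add_finrank_inf_ker (Submodule.span ℝ C)]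
  ring

/-- Equality case: if `C ⊆ V × W` is a convex cone, `ν ≠ 0`, and `(x, ν)` lies in the
intrinsic (relative) interior of `C` for some `x`, then with `H_ν := V × ℝν`
one has `dim(C ∩ H_ν) + dim q(C) = dim C + 1`. -/
theorem stmt_4
    (V W : Type*) [NormedAddCommGroup V] [NormedSpace ℝ V] [FiniteDimensional ℝ V]
    [NormedAddCommGroup W] [NormedSpace ℝ W] [FiniteDimensional ℝ W]
    (C : Set (V × W))
    (hconv : Convex ℝ C)
    (hcone : ∀ t : ℝ, 0 < t → t • C ⊆ C)
    (ν : W) (hν : ν ≠ 0)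
    (hint : ∃ x : V, (x, ν) ∈ intrinsicInterior ℝ C) :
    Module.finrank ℝ
        ↥(Submodule.span ℝ (C ∩ ((⊤ : Submodule ℝ V).prod (ℝ ∙ ν) : Set (V × W))))
      + Module.finrank ℝ ↥(Submodule.span ℝ (Prod.snd '' C))
      = Module.finrank ℝ ↥(Submodule.span ℝ C) + 1 :=
  stmt_4_general V W C hcone ν hν hint
end

section
/- Let V and W be finite-dimensional real normed vector spaces, let C ⊆ V × W be a convex cone (convex and stable under multiplication by positive reals) whose linear span is all of V × W, and let F ⊆ V be a linear subspace such that the linear span of C ∩ (F × W) equals F × W. Then there exists a convex subset Ω ⊆ W with 0 ∉ Ω and ⟨Ω⟩ = W such that for every ν ∈ Ω, writing H_ν := {(v, tν) : v ∈ V, t ∈ ℝ}, one has dim(C ∩ H_ν) + dim F = dim(C ∩ (F × W) ∩ H_ν) + dim V. -/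
/-!
If `ν` is an interior point of the projection to `W` of a convex cone `K ⊆ V × W`, then slicing
by `H_ν` commutes with taking spans: `⟨K ∩ H_ν⟩ = ⟨K⟩ ∩ H_ν`. Modulo a point of `K ∩ H_ν`, an
element of `⟨K⟩ ∩ H_ν` is a difference `a - b` of points of `K` over the same `w ∈ W`; if `c ∈ K`
lies over `ν - ε w`, then `ε a + c` and `ε b + c` lie in `K ∩ H_ν` and differ by `ε (a - b)`.
Since `C ∩ (F × W)` spans `F × W`, its projection spans `W` and so has nonempty interior, and we
take for `Ω` a ball avoiding `0` inside it. Then `⟨C ∩ H_ν⟩ = V × ℝν` and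
`⟨C ∩ (F × W) ∩ H_ν⟩ = F × ℝν`, and both sides equal `dim V + dim F + 1`.
-/

open Pointwise Set Topology Submodule

section Cone

variable {𝕜 E : Type*} [Field 𝕜] [LinearOrder 𝕜] [IsStrictOrderedRing 𝕜]
  [AddCommGroup E] [Module 𝕜 E]

def ConvexCone.ofConvex {K : Set E} (hconv : Convex 𝕜 K) (hcone : ∀ t : 𝕜, 0 < t → t • K ⊆ K) :
    ConvexCone 𝕜 E where
  carrier := K
  smul_mem' _ ht _ hx := hcone _ ht (smul_mem_smul_set hx)
  add_mem' x hx y hy := by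
    have hmid := hconv hx hy (by positivity) (by positivity) (add_halves (1 : 𝕜))
    have := hcone 2 two_pos (smul_mem_smul_set hmid)
    rwa [smul_add, smul_smul, smul_smul, mul_one_div_cancel two_ne_zero, one_smul, one_smul]
      at this

theorem ConvexCone.exists_sub_eq_of_mem_span (K : ConvexCone 𝕜 E) (hK : (K : Set E).Nonempty)
    {y : E} (hy : y ∈ span 𝕜 (K : Set E)) : ∃ a ∈ K, ∃ b ∈ K, a - b = y := by
  obtain ⟨a₀, ha₀⟩ := hK
  induction hy using span_induction with
  | mem x hx => exact ⟨x + x, K.add_mem hx hx, x, hx, add_sub_cancel_right x x⟩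
  | zero => exact ⟨a₀, ha₀, a₀, ha₀, sub_self a₀⟩
  | add x y _ _ hx hy =>
    obtain ⟨a, ha, b, hb, rfl⟩ := hx
    obtain ⟨c, hc, d, hd, rfl⟩ := hy
    exact ⟨a + c, K.add_mem ha hc, b + d, K.add_mem hb hd, add_sub_add_comm a c b d⟩
  | smul r x _ hx =>
    obtain ⟨a, ha, b, hb, rfl⟩ := hx
    rcases lt_trichotomy r 0 with hr | rfl | hr
    · exact ⟨(-r) • b, K.smul_mem (neg_pos.2 hr) hb, (-r) • a, K.smul_mem (neg_pos.2 hr) ha,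
        by rw [neg_smul, neg_smul, neg_sub_neg, smul_sub]⟩
    · exact ⟨a₀, ha₀, a₀, ha₀, by rw [sub_self, zero_smul]⟩
    · exact ⟨r • a, K.smul_mem hr ha, r • b, K.smul_mem hr hb, (smul_sub r a b).symm⟩

end Cone

theorem exists_pos_sub_smul_mem_of_mem_interior {W : Type*} [AddCommGroup W] [Module ℝ W]
    [TopologicalSpace W] [IsTopologicalAddGroup W] [ContinuousSMul ℝ W] {S : Set W} {ν : W}
    (hν : ν ∈ interior S) (w : W) : ∃ ε : ℝ, 0 < ε ∧ ν - ε • w ∈ S := by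
  have hlim : Filter.Tendsto (fun ε : ℝ => ν - ε • w) (𝓝[>] 0) (𝓝 ν) :=
    ((continuous_const.sub (continuous_id.smul continuous_const)).tendsto' 0 ν
      (by simp)).mono_left nhdsWithin_le_nhds
  obtain ⟨ε, hεS, hε⟩ :=
    ((hlim.eventually (mem_interior_iff_mem_nhds.1 hν)).and self_mem_nhdsWithin).exists
  exact ⟨ε, hε, hεS⟩

section Slice

variable {E W : Type*} [AddCommGroup E] [Module ℝ E] [AddCommGroup W] [Module ℝ W]
  [TopologicalSpace W] [IsTopologicalAddGroup W] [ContinuousSMul ℝ W]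
  (K : ConvexCone ℝ E) (f : E →ₗ[ℝ] W) {ν : W}

theorem ConvexCone.sub_mem_span_inter_comap_of_map_eq (hν : ν ∈ interior (f '' K)) {a b : E}
    (ha : a ∈ K) (hb : b ∈ K) (hab : f a = f b) :
    a - b ∈ span ℝ ((K : Set E) ∩ (ℝ ∙ ν).comap f) := by
  obtain ⟨ε, hε, c, hcK, hc⟩ := exists_pos_sub_smul_mem_of_mem_interior hν (f a)
  have hslice : ∀ z ∈ K, f z = f a → ε • z + c ∈ (K : Set E) ∩ (ℝ ∙ ν).comap f := by
    intro z hz hfz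
    refine ⟨K.add_mem (K.smul_mem hε hz) hcK, ?_⟩
    rw [SetLike.mem_coe, Submodule.mem_comap, map_add, map_smul, hfz, hc, add_sub_cancel]
    exact mem_span_singleton_self ν
  have hdiff :=
    sub_mem (subset_span (R := ℝ) (hslice a ha rfl)) (subset_span (hslice b hb hab.symm))
  rwa [add_sub_add_right_eq_sub, ← smul_sub, Submodule.smul_mem_iff _ hε.ne'] at hdiff

theorem ConvexCone.span_inter_comap_span_singleton (hν : ν ∈ interior (f '' K)) :
    span ℝ ((K : Set E) ∩ (ℝ ∙ ν).comap f) = span ℝ (K : Set E) ⊓ (ℝ ∙ ν).comap f := by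
  refine le_antisymm (span_le.2 fun x hx => ⟨subset_span hx.1, hx.2⟩) ?_
  rintro x ⟨hxK, hxν⟩
  obtain ⟨t, ht⟩ := Submodule.mem_span_singleton.1 (Submodule.mem_comap.1 hxν)
  obtain ⟨a₀, ha₀, hfa₀⟩ := interior_subset hν
  have ha₀ν : a₀ ∈ (K : Set E) ∩ (ℝ ∙ ν).comap f :=
    ⟨ha₀, by rw [SetLike.mem_coe, Submodule.mem_comap, hfa₀]; exact mem_span_singleton_self ν⟩
  obtain ⟨a, ha, b, hb, hab⟩ :=
    K.exists_sub_eq_of_mem_span ⟨a₀, ha₀⟩ (sub_mem hxK (smul_mem _ t (subset_span ha₀)))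
  have hfab : f a = f b := by
    rw [← sub_eq_zero, ← map_sub, hab, map_sub, map_smul, hfa₀, ht, sub_self]
  have hy := K.sub_mem_span_inter_comap_of_map_eq f hν ha hb hfab
  rw [hab] at hy
  simpa using add_mem hy (smul_mem _ t (subset_span ha₀ν))

end Slice

section Normed

variable {W : Type*} [NormedAddCommGroup W] [NormedSpace ℝ W]

theorem ConvexCone.interior_nonempty_of_span_eq_top [FiniteDimensional ℝ W] (K : ConvexCone ℝ W)
    (hne : (K : Set W).Nonempty) (hK : span ℝ (K : Set W) = ⊤) :
    (interior (K : Set W)).Nonempty := by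
  rw [K.convex.interior_nonempty_iff_affineSpan_eq_top,
    AffineSubspace.affineSpan_eq_top_iff_vectorSpan_eq_top_of_nonempty ℝ W W hne, eq_top_iff, ← hK,
    span_le]
  intro u hu
  simpa using vsub_mem_vectorSpan ℝ (K.add_mem hu hu) hu

theorem IsOpen.exists_convex_subset_zero_notMem_span_eq_top [Nontrivial W] {U : Set W}
    (hU : IsOpen U) (hne : U.Nonempty) :
    ∃ Ω ⊆ U, Convex ℝ Ω ∧ (0 : W) ∉ Ω ∧ span ℝ Ω = ⊤ := by
  obtain ⟨ν, hνU, hν⟩ := (dense_compl_singleton (0 : W)).inter_open_nonempty U hU hne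
  obtain ⟨δ, hδ, hball⟩ := Metric.isOpen_iff.1 hU ν hνU
  have hr : 0 < min δ ‖ν‖ := lt_min hδ (norm_pos_iff.2 hν)
  refine ⟨Metric.ball ν (min δ ‖ν‖), (Metric.ball_subset_ball (min_le_left _ _)).trans hball,
    convex_ball _ _, ?_, ?_⟩
  · rw [Metric.mem_ball, dist_zero_left]
    exact (min_le_right _ _).not_gt
  · have := Metric.isOpen_ball.affineSpan_eq_top ((Metric.nonempty_ball (x := ν)).2 hr)
    exact eq_top_iff.2 fun x _ => affineSpan_subset_span (this ▸ AffineSubspace.mem_top ℝ W x)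

end Normed

theorem Submodule.finrank_prod {𝕜 V W : Type*} [DivisionRing 𝕜] [AddCommGroup V] [Module 𝕜 V]
    [AddCommGroup W] [Module 𝕜 W] [FiniteDimensional 𝕜 V] [FiniteDimensional 𝕜 W]
    (p : Submodule 𝕜 V) (q : Submodule 𝕜 W) :
    Module.finrank 𝕜 (p.prod q) = Module.finrank 𝕜 p + Module.finrank 𝕜 q := by
  let e : p.prod q ≃ₗ[𝕜] p × q :=
    { toFun x := (⟨x.1.1, x.2.1⟩, ⟨x.1.2, x.2.2⟩)
      invFun y := ⟨(y.1, y.2), y.1.2, y.2.2⟩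
      left_inv _ := rfl
      right_inv _ := rfl
      map_add' _ _ := rfl
      map_smul' _ _ := rfl }
  rw [e.finrank_eq, Module.finrank_prod]

/-- If `C ⊆ V × W` is a convex cone spanning `V × W` and `F ⊆ V` is a subspace with
`⟨C ∩ (F × W)⟩ = F × W` (the face `F` is full), then there is a convex set
`Ω ⊆ W` with `0 ∉ Ω` spanning `W` such that for all `ν ∈ Ω`, with `H_ν := V × ℝν`,
`dim(C ∩ H_ν) + dim F = dim(C ∩ (F × W) ∩ H_ν) + dim V`. -/
theorem stmt_5
    (V W : Type*) [NormedAddCommGroup V] [NormedSpace ℝ V] [FiniteDimensional ℝ V]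
    [NormedAddCommGroup W] [NormedSpace ℝ W] [FiniteDimensional ℝ W]
    (C : Set (V × W))
    (hconv : Convex ℝ C)
    (hcone : ∀ t : ℝ, 0 < t → t • C ⊆ C)
    (hspan : Submodule.span ℝ C = ⊤)
    (F : Submodule ℝ V)
    (hF : Submodule.span ℝ (C ∩ (F.prod ⊤ : Submodule ℝ (V × W))) = F.prod ⊤) :
    ∃ Ω : Set W, Convex ℝ Ω ∧ (0 : W) ∉ Ω ∧ Submodule.span ℝ Ω = ⊤ ∧
      ∀ ν ∈ Ω,
        Module.finrank ℝ
            ↥(Submodule.span ℝ (C ∩ ((⊤ : Submodule ℝ V).prod (ℝ ∙ ν) : Set (V × W))))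
          + Module.finrank ℝ ↥F
        = Module.finrank ℝ
            ↥(Submodule.span ℝ (C ∩ (F.prod ⊤ : Submodule ℝ (V × W))
                ∩ ((⊤ : Submodule ℝ V).prod (ℝ ∙ ν) : Set (V × W))))
          + Module.finrank ℝ V := by
  rcases subsingleton_or_nontrivial W with hW | hW
  · exact ⟨∅, convex_empty, id, Subsingleton.elim _ _, fun _ => False.elim⟩
  let K := ConvexCone.ofConvex hconv hcone
  let D := K ⊓ (F.prod ⊤).toConvexCone
  let snd := LinearMap.snd ℝ V W
  have hDspan : span ℝ (snd '' D) = ⊤ := by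
    rw [span_image]
    exact (congrArg (map snd) hF).trans (prod_map_snd F ⊤)
  have hDne : (snd '' D).Nonempty :=
    nonempty_iff_ne_empty.2 fun h => bot_ne_top (by rwa [h, span_empty] at hDspan)
  obtain ⟨Ω, hΩ, hΩconv, hΩ0, hΩspan⟩ :=
    isOpen_interior.exists_convex_subset_zero_notMem_span_eq_top
      ((D.map snd).interior_nonempty_of_span_eq_top hDne hDspan)
  refine ⟨Ω, hΩconv, hΩ0, hΩspan, fun ν hν => ?_⟩
  have hνD : ν ∈ interior (snd '' D) := hΩ hν
  have hνK : ν ∈ interior (snd '' K) := interior_mono (image_mono inter_subset_left) hνD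
  have hK : span ℝ (C ∩ ((⊤ : Submodule ℝ V).prod (ℝ ∙ ν) : Set (V × W))) =
      (⊤ : Submodule ℝ V).prod (ℝ ∙ ν) := by
    have := K.span_inter_comap_span_singleton snd hνK
    rwa [comap_snd, show span ℝ (K : Set (V × W)) = ⊤ from hspan, top_inf_eq] at this
  have hD : span ℝ (C ∩ (F.prod ⊤ : Submodule ℝ (V × W)) ∩
      ((⊤ : Submodule ℝ V).prod (ℝ ∙ ν) : Set (V × W))) = F.prod (ℝ ∙ ν) := by
    have := D.span_inter_comap_span_singleton snd hνD
    rwa [comap_snd, show span ℝ (D : Set (V × W)) = F.prod ⊤ from hF, prod_inf_prod, inf_top_eq,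
      top_inf_eq] at this
  have hν0 : ν ≠ 0 := fun h => hΩ0 (h ▸ hν)
  rw [hK, hD, finrank_prod, finrank_prod, finrank_top, finrank_span_singleton hν0]
  ring
end

section
/- Let k be a field of characteristic zero, let n ≥ 1, and let D be the n × n diagonal matrix over k with diagonal entries 1, 2, …, n. Then the set of matrices g ∈ M_n(k) satisfying gᵀ g = 1 (g is orthogonal) and for which there exist a, b ∈ k with g D g⁻¹ = a·1 + b·D, is finite. -/
/-- Let `D = diag(1, 2, …, n)` over a field `k` of characteristic zero. The set of
orthogonal matrices `g` (`gᵀ g = 1`) such that `g D g⁻¹ = a • 1 + b • D` for some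
`a, b ∈ k` is finite. -/
theorem stmt_8
    (k : Type*) [Field k] [CharZero k]
    (n : ℕ) (hn : 1 ≤ n)
    (D : Matrix (Fin n) (Fin n) k)
    (hD : D = Matrix.diagonal (fun i : Fin n => ((i : ℕ) + 1 : k))) :
    {g : Matrix (Fin n) (Fin n) k |
      g.transpose * g = 1 ∧
      ∃ a b : k, g * D * g⁻¹ = a • (1 : Matrix (Fin n) (Fin n) k) + b • D}.Finite := by
  set d : Fin n → k := fun i => ((i : ℕ) + 1 : k) with hd
  have hdinj : Function.Injective d := by
    intro i j hij
    have h2 : ((i : ℕ) : k) + 1 = ((j : ℕ) : k) + 1 := hij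
    exact Fin.ext (Nat.cast_injective (add_right_cancel h2))
  have hS : ({0, 1, -1} : Set k).Finite := by
    simp only [Set.insert_eq]
    exact (Set.finite_singleton _).union ((Set.finite_singleton _).union
      (Set.finite_singleton _))
  have hbig : (Set.pi Set.univ (fun _ : Fin n =>
      Set.pi Set.univ (fun _ : Fin n => ({0, 1, -1} : Set k)))).Finite :=
    Set.Finite.pi fun _ => Set.Finite.pi fun _ => hS
  refine (hbig.image ⇑(Matrix.of (m := Fin n) (n := Fin n) (α := k))).subset ?_
  rintro g ⟨hg, a, b, hab⟩
  refine ⟨fun i j => g i j, ?_, rfl⟩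
  simp only [Set.mem_pi, Set.mem_univ, forall_true_left]
  -- g is invertible with inverse gᵀ
  have hg' := mul_eq_one_comm.mp hg
  have hginv := Matrix.inv_eq_right_inv hg'
  have hgl : g⁻¹ * g = 1 := by rw [hginv]; exact hg
  have hgr : g * g⁻¹ = 1 := by rw [hginv]; exact hg'
  -- key intertwining relation
  have key : g * D = (a • (1 : Matrix (Fin n) (Fin n) k) + b • D) * g := by
    calc g * D = (g * D * g⁻¹) * g := by
          rw [Matrix.mul_assoc (g * D), hgl, Matrix.mul_one]
      _ = (a • (1 : Matrix (Fin n) (Fin n) k) + b • D) * g := by rw [hab]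
  -- entrywise equation
  have entry : ∀ i j, g i j * d j = a * g i j + b * (d i * g i j) := by
    intro i j
    have := congrFun (congrFun key i) j
    rw [hD] at this
    simpa [Matrix.add_mul, Matrix.smul_mul, Matrix.one_mul, Matrix.mul_diagonal,
      Matrix.diagonal_mul, Matrix.add_apply, Matrix.smul_apply, smul_eq_mul, hd,
      mul_comm, mul_left_comm] using this
  -- at most one nonzero entry in each column
  have uniq : ∀ j i₁ i₂, g i₁ j ≠ 0 → g i₂ j ≠ 0 → i₁ = i₂ := by
    intro j i₁ i₂ h₁ h₂
    by_cases hb : b = 0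
    · -- then D = a • 1, so d i₁ = a = d i₂
      have hDa : D = a • (1 : Matrix (Fin n) (Fin n) k) := by
        have : g * D = a • g := by
          rw [key, hb, zero_smul, add_zero, Matrix.smul_mul, Matrix.one_mul]
        calc D = g⁻¹ * (g * D) := by rw [← Matrix.mul_assoc, hgl, Matrix.one_mul]
          _ = a • (g⁻¹ * g) := by rw [this, Matrix.mul_smul]
          _ = a • (1 : Matrix (Fin n) (Fin n) k) := by rw [hgl]
      have e1 : d i₁ = a := by
        have := congrFun (congrFun hDa i₁) i₁
        rw [hD] at this
        simpa [Matrix.diagonal_apply_eq, Matrix.one_apply, hd] using this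
      have e2 : d i₂ = a := by
        have := congrFun (congrFun hDa i₂) i₂
        rw [hD] at this
        simpa [Matrix.diagonal_apply_eq, Matrix.one_apply, hd] using this
      exact hdinj (e1.trans e2.symm)
    · have e1 : d j = a + b * d i₁ := by
        have h : (d j - (a + b * d i₁)) * g i₁ j = 0 := by
          linear_combination entry i₁ j
        rcases mul_eq_zero.mp h with h | h
        · exact sub_eq_zero.mp h
        · exact absurd h h₁
      have e2 : d j = a + b * d i₂ := by
        have h : (d j - (a + b * d i₂)) * g i₂ j = 0 := by
          linear_combination entry i₂ j
        rcases mul_eq_zero.mp h with h | h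
        · exact sub_eq_zero.mp h
        · exact absurd h h₂
      have : b * d i₁ = b * d i₂ := add_left_cancel (e1.symm.trans e2)
      exact hdinj (mul_left_cancel₀ hb this)
  -- conclude entries lie in {0, 1, -1}
  intro i j
  by_cases h0 : g i j = 0
  · left; exact h0
  · right
    have hsum : (∑ l, g l j * g l j) = 1 := by
      have := congrFun (congrFun hg j) j
      simpa [Matrix.mul_apply, Matrix.transpose_apply, Matrix.one_apply] using this
    have hsingle : (∑ l, g l j * g l j) = g i j * g i j := by
      refine Finset.sum_eq_single i (fun l _ hl => ?_) (fun h => absurd (Finset.mem_univ i) h)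
      by_contra hne
      exact hl (uniq j l i (fun hz => hne (by rw [hz, zero_mul])) h0)
    have := mul_self_eq_one_iff.mp (hsingle.symm.trans hsum)
    rcases this with h | h
    · left; exact h
    · right; exact h
end

section
/- Let k be a field of characteristic zero, and in M₂(k) let H = [[1,0],[0,−1]] and F = [[0,1],[1,0]]. Then the set of matrices g ∈ SL₂(k) such that g H g⁻¹ lies in the line spanned by H and g F g⁻¹ lies in the plane spanned by H and F, is finite. -/
/-- With `H = [[1,0],[0,-1]]` and `F = [[0,1],[1,0]]` in `M₂(k)` (`k` of characteristic
zero), the set of `g ∈ SL₂(k)` such that `g H g⁻¹ ∈ ⟨H⟩` and `g F g⁻¹ ∈ ⟨H, F⟩`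
is finite. -/
theorem stmt_9
    (k : Type*) [Field k] [CharZero k]
    (H F : Matrix (Fin 2) (Fin 2) k)
    (hH : H = !![(1 : k), 0; 0, -1])
    (hF : F = !![(0 : k), 1; 1, 0]) :
    {g : Matrix (Fin 2) (Fin 2) k |
      g.det = 1 ∧
      (∃ lam : k, g * H * g⁻¹ = lam • H) ∧
      (∃ a b : k, g * F * g⁻¹ = a • H + b • F)}.Finite := by
  have hS : ({x : k | x ^ 4 = 1} : Set k).Finite := by
    have hp : (Polynomial.X ^ 4 - 1 : Polynomial k) ≠ 0 := by
      intro h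
      have := congrArg (Polynomial.coeff · 4) h
      simp [Polynomial.coeff_one] at this
    refine (Polynomial.finite_setOf_isRoot hp).subset ?_
    intro x hx
    simp only [Set.mem_setOf_eq] at hx
    simp [Polynomial.IsRoot, sub_eq_zero, hx]
  refine Set.Finite.subset
    ((hS.image (fun p : k => !![p, 0; 0, p⁻¹])).union
      (hS.image (fun q : k => !![0, q; -q⁻¹, 0]))) ?_
  rintro g ⟨hdet, ⟨lam, hlam⟩, ⟨a, b, hab⟩⟩
  have hu : IsUnit g.det := by rw [hdet]; exact isUnit_one
  have hinv : g⁻¹ * g = 1 := Matrix.nonsing_inv_mul g hu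
  set p := g 0 0 with hp
  set q := g 0 1 with hq
  set r := g 1 0 with hr
  set s := g 1 1 with hs
  have hg : g = !![p, q; r, s] := by
    rw [Matrix.eta_fin_two g]
  have hdet' : p * s - q * r = 1 := by
    rw [← hdet, hg, Matrix.det_fin_two]
    simp
  -- turn the conjugation equations into commutation equations
  have h1 : g * H = lam • (H * g) := by
    have := congrArg (· * g) hlam
    simp only [mul_assoc, hinv, mul_one, Matrix.smul_mul] at this
    simpa [mul_assoc] using this
  have h2 : g * F = (a • H + b • F) * g := by
    have := congrArg (· * g) hab
    simp only [mul_assoc, hinv, mul_one] at this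
    simpa [mul_assoc] using this
  rw [hg, hH] at h1
  rw [hg, hF, hH] at h2
  have h1' := Matrix.ext_iff.2 h1
  have e00 := h1' 0 0
  have e01 := h1' 0 1
  have e10 := h1' 1 0
  have e11 := h1' 1 1
  simp [Matrix.mul_apply, Fin.sum_univ_two] at e00 e01 e10 e11
  -- e00 : p = lam * p, e01 : -q = lam * q, e10 : r = -(lam*r), e11 : s = lam*s
  have h2' := Matrix.ext_iff.2 h2
  have f00 := h2' 0 0
  have f01 := h2' 0 1
  have f10 := h2' 1 0
  have f11 := h2' 1 1
  simp [Matrix.mul_apply, Fin.sum_univ_two] at f00 f01 f10 f11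
  -- f00 : q = a*p + b*r, f01 : p = a*q + b*s, f10 : s = b*p + -(a*r), f11 : r = b*q + -(a*s)
  have hlam2 : lam ^ 2 = 1 := by
    linear_combination (-(s + lam * s)) * e00 + lam * r * e01 + q * e10 -
      (lam ^ 2 - 1) * hdet'
  have hlampm : lam = 1 ∨ lam = -1 := by
    have hfac : (lam - 1) * (lam + 1) = 0 := by linear_combination hlam2
    rcases mul_eq_zero.1 hfac with h | h
    · exact Or.inl (by linear_combination h)
    · exact Or.inr (by linear_combination h)
  rcases hlampm with h | h
  · -- diagonal case
    subst h
    have hq0 : q = 0 := by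
      have h2q : (2 : k) * q = 0 := by linear_combination -e01
      exact (mul_eq_zero.1 h2q).resolve_left two_ne_zero
    have hr0 : r = 0 := by
      have h2r : (2 : k) * r = 0 := by linear_combination e10
      exact (mul_eq_zero.1 h2r).resolve_left two_ne_zero
    have hps : p * s = 1 := by linear_combination hdet' + r * hq0
    have hpne : p ≠ 0 := left_ne_zero_of_mul_eq_one hps
    have hb : p = b * s := by linear_combination f01 + a * hq0
    have hb' : s = b * p := by linear_combination f10 - a * hr0
    have hbsq : b ^ 2 = 1 := by
      have h' : (b ^ 2 - 1) * p = 0 := by linear_combination -hb - b * hb'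
      have := (mul_eq_zero.1 h').resolve_right hpne
      linear_combination this
    have hb2 : p ^ 2 = b := by linear_combination p * hb + b * hps
    have hp4 : p ^ 4 = 1 := by linear_combination (p ^ 2 + b) * hb2 + hbsq
    have hsval : s = p⁻¹ := by
      field_simp
      linear_combination hps
    left
    exact ⟨p, hp4, by rw [hg, hq0, hr0, hsval]⟩
  · -- antidiagonal case
    subst h
    have hp0 : p = 0 := by
      have h2p : (2 : k) * p = 0 := by linear_combination e00
      exact (mul_eq_zero.1 h2p).resolve_left two_ne_zero
    have hs0 : s = 0 := by
      have h2s : (2 : k) * s = 0 := by linear_combination e11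
      exact (mul_eq_zero.1 h2s).resolve_left two_ne_zero
    have hqr : q * r = -1 := by linear_combination -hdet' + s * hp0
    have hqne : q ≠ 0 := by
      intro h'
      rw [h', zero_mul] at hqr
      exact one_ne_zero (neg_eq_zero.1 hqr.symm)
    have hb : q = b * r := by linear_combination f00 + a * hp0
    have hb' : r = b * q := by linear_combination f11 - a * hs0
    have hbsq : b ^ 2 = 1 := by
      have h' : (b ^ 2 - 1) * q = 0 := by linear_combination -hb - b * hb'
      have := (mul_eq_zero.1 h').resolve_right hqne
      linear_combination this
    have hb2 : q ^ 2 = -b := by linear_combination q * hb + b * hqr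
    have hq4 : q ^ 4 = 1 := by linear_combination (q ^ 2 - b) * hb2 + hbsq
    have hrval : r = -q⁻¹ := by
      field_simp
      linear_combination hqr
    right
    exact ⟨q, hq4, by rw [hg, hp0, hs0, hrval]⟩
end

section
/- Let K be a field of characteristic zero, let n ≥ 2 be a natural number, and let a, b ∈ K. If the image of the set {1, 2, …, n} under the map i ↦ a + b·i equals the image of {1, 2, …, n} under i ↦ (i : K) (as subsets of K), then either (a = 0 and b = 1) or (a = n + 1 and b = −1). -/
open scoped Classical

lemma sum_cast_Icc (K : Type*) [Field K] [CharZero K] (n : ℕ) :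
    (∑ i ∈ Finset.Icc 1 n, (i : K)) * 2 = (n : K) * ((n : K) + 1) := by
  induction n with
  | zero => simp
  | succ m ih =>
    rw [Finset.sum_Icc_succ_top (by omega : 1 ≤ m + 1)]
    push_cast
    push_cast at ih
    linear_combination ih

lemma sum_sq_cast_Icc (K : Type*) [Field K] [CharZero K] (n : ℕ) :
    (∑ i ∈ Finset.Icc 1 n, (i : K) ^ 2) * 6
      = (n : K) * ((n : K) + 1) * (2 * (n : K) + 1) := by
  induction n with
  | zero => simp
  | succ m ih =>
    rw [Finset.sum_Icc_succ_top (by omega : 1 ≤ m + 1)]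
    push_cast
    push_cast at ih
    linear_combination ih

/-- Eigenvalue-set comparison: if `{a + b·i : 1 ≤ i ≤ n} = {i : 1 ≤ i ≤ n}` in a field
`K` of characteristic zero with `n ≥ 2`, then `(a, b) = (0, 1)` or `(a, b) = (n+1, -1)`. -/
theorem stmt_10
    (K : Type*) [Field K] [CharZero K]
    (n : ℕ) (hn : 2 ≤ n) (a b : K)
    (h : (Finset.Icc 1 n).image (fun i : ℕ => a + b * (i : K))
        = (Finset.Icc 1 n).image (fun i : ℕ => (i : K))) :
    (a = 0 ∧ b = 1) ∨ (a = (n : K) + 1 ∧ b = -1) := by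
  have hne : (Finset.Icc 1 n).Nonempty := Finset.nonempty_Icc.2 (by omega)
  have hcastinj : ∀ x ∈ Finset.Icc 1 n, ∀ y ∈ Finset.Icc 1 n,
      (x : K) = (y : K) → x = y := fun x _ y _ hxy => Nat.cast_injective hxy
  have hb0 : b ≠ 0 := by
    rintro rfl
    have h1 : ((Finset.Icc 1 n).image (fun i : ℕ => a + 0 * (i : K))).card = 1 := by
      rw [show (fun i : ℕ => a + 0 * (i : K)) = fun _ => a by funext i; ring,
        Finset.image_const hne]
      simp
    rw [h, Finset.card_image_of_injOn hcastinj, Nat.card_Icc] at h1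
    omega
  have hinj : ∀ x ∈ Finset.Icc 1 n, ∀ y ∈ Finset.Icc 1 n,
      a + b * (x : K) = a + b * (y : K) → x = y := by
    intro x _ y _ hxy
    have hbx : b * (x : K) = b * (y : K) := by linear_combination hxy
    have : (x : K) = (y : K) := mul_left_cancel₀ hb0 hbx
    exact_mod_cast this
  set S : K := ∑ i ∈ Finset.Icc 1 n, (i : K) with hS
  set Q : K := ∑ i ∈ Finset.Icc 1 n, (i : K) ^ 2 with hQ
  have hn0 : (n : K) ≠ 0 := Nat.cast_ne_zero.2 (by omega)
  -- sum equality
  have E1 : (n : K) * a + b * S = S := by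
    have A := Finset.sum_image (f := fun x : K => x)
      (g := fun i : ℕ => a + b * (i : K)) (s := Finset.Icc 1 n) hinj
    have B := Finset.sum_image (f := fun x : K => x)
      (g := fun i : ℕ => (i : K)) (s := Finset.Icc 1 n) hcastinj
    have h1 : ∑ i ∈ Finset.Icc 1 n, (a + b * (i : K)) = S := by
      rw [← A, h, B]
    rw [Finset.sum_add_distrib, Finset.sum_const, ← Finset.mul_sum, ← hS,
      Nat.card_Icc, nsmul_eq_mul] at h1
    have : ((n + 1 - 1 : ℕ) : K) = (n : K) := by push_cast [Nat.add_sub_cancel]; ring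
    rw [this] at h1
    exact h1
  -- sum of squares equality
  have E2 : (n : K) * a ^ 2 + 2 * a * b * S + b ^ 2 * Q = Q := by
    have A := Finset.sum_image (f := fun x : K => x ^ 2)
      (g := fun i : ℕ => a + b * (i : K)) (s := Finset.Icc 1 n) hinj
    have B := Finset.sum_image (f := fun x : K => x ^ 2)
      (g := fun i : ℕ => (i : K)) (s := Finset.Icc 1 n) hcastinj
    have h2 : ∑ i ∈ Finset.Icc 1 n, (a + b * (i : K)) ^ 2 = Q := by
      rw [← A, h, B]
    have expand : ∑ i ∈ Finset.Icc 1 n, (a + b * (i : K)) ^ 2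
        = ∑ i ∈ Finset.Icc 1 n, (a ^ 2 + 2 * a * b * (i : K) + b ^ 2 * (i : K) ^ 2) := by
      refine Finset.sum_congr rfl fun i _ => by ring
    rw [expand, Finset.sum_add_distrib, Finset.sum_add_distrib, Finset.sum_const,
      ← Finset.mul_sum, ← Finset.mul_sum, ← hS, ← hQ, Nat.card_Icc, nsmul_eq_mul] at h2
    have : ((n + 1 - 1 : ℕ) : K) = (n : K) := by push_cast [Nat.add_sub_cancel]; ring
    rw [this] at h2
    exact h2
  have key : (1 - b ^ 2) * ((n : K) * Q - S ^ 2) = 0 := by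
    linear_combination (-(n : K)) * E2 + ((n : K) * a + b * S + S) * E1
  have hS2 : S * 2 = (n : K) * ((n : K) + 1) := sum_cast_Icc K n
  have hQ6 : Q * 6 = (n : K) * ((n : K) + 1) * (2 * (n : K) + 1) := sum_sq_cast_Icc K n
  have hvar : (n : K) * Q - S ^ 2 ≠ 0 := by
    intro h0
    have h12 : (n : K) ^ 2 * ((n : K) + 1) * ((n : K) - 1) = 0 := by
      linear_combination 12 * h0 - 2 * (n : K) * hQ6
        + 3 * (2 * S + (n : K) * ((n : K) + 1)) * hS2
    have hn1 : (n : K) + 1 ≠ 0 := by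
      intro hc
      have : ((n + 1 : ℕ) : K) = 0 := by push_cast; linear_combination hc
      exact absurd (Nat.cast_eq_zero.1 this) (by omega)
    have hnm1 : (n : K) - 1 ≠ 0 := by
      intro hc
      have : (n : K) = ((1 : ℕ) : K) := by push_cast; linear_combination hc
      exact absurd (Nat.cast_injective this) (by omega)
    have := mul_ne_zero (mul_ne_zero (pow_ne_zero 2 hn0) hn1) hnm1
    exact this h12
  have hb2 : 1 - b ^ 2 = 0 := by
    rcases mul_eq_zero.1 key with h' | h'
    · exact h'
    · exact absurd h' hvar
  have : (1 - b) * (1 + b) = 0 := by linear_combination hb2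
  rcases mul_eq_zero.1 this with h' | h'
  · left
    have hb : b = 1 := by linear_combination -h'
    subst hb
    refine ⟨?_, rfl⟩
    have : (n : K) * a = 0 := by linear_combination E1
    exact (mul_eq_zero.1 this).resolve_left hn0
  · right
    have hb : b = -1 := by linear_combination h'
    subst hb
    refine ⟨?_, rfl⟩
    have : (n : K) * a = (n : K) * ((n : K) + 1) := by
      linear_combination E1 + hS2
    exact mul_left_cancel₀ hn0 (by linear_combination this)
end
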